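/- arXiv:1909.00980 — 3 statements merged into one kernel-verified Lean document; each statement's English description precedes it below -/
import Mathlib

section
/- Let α ∈ (0,1) be irrational with continued fraction expansion [0; a_1, a_2, ...] and best approximation denominators (q_n). Then every natural number N ≥ 1 has a unique expansion N = ∑_{j=1}^z b_j q_j where 0 ≤ b_1 ≤ a_1 − 1, 0 ≤ b_j ≤ a_j for j > 1, and whenever b_j = a_j for some j > 1 one has b_{j-1} = 0. -/
/-!
An expansion `∑ b_j q_j` with admissible digits supported in `[1, z]` is smaller than `q_{z+1}`:
a maximal digit `b_j = a_j` forces `b_{j-1} = 0`, and `a_j q_j + q_{j-1} = q_{j+1}`.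
So the top digit `b_z` and the rest of an expansion of `N` are the quotient and the remainder of
`N` by `q_z`, which gives uniqueness; choosing the digits greedily as these quotients produces
admissible digits, which gives existence.
-/

open Finset

namespace Ostrowski

def denom (a : ℕ → ℕ) : ℕ → ℕ
  | 0 => 0
  | 1 => 1
  | n + 2 => a (n + 1) * denom a (n + 1) + denom a n

structure Admissible (a : ℕ → ℕ) (b : ℕ → ℕ) : Prop where
  zero : b 0 = 0
  one_lt : b 1 < a 1
  le : ∀ j, 2 ≤ j → b j ≤ a j
  eq_zero_of_eq : ∀ j, 2 ≤ j → b j = a j → b (j - 1) = 0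

variable {a : ℕ → ℕ}

theorem eq_denom_of_rec {q : ℕ → ℤ} (hq0 : q 0 = 0) (hq1 : q 1 = 1)
    (hqrec : ∀ n, 1 ≤ n → q (n + 1) = a n * q n + q (n - 1)) : ∀ n, q n = denom a n
  | 0 => by simp [hq0, denom]
  | 1 => by simp [hq1, denom]
  | n + 2 => by
    rw [hqrec (n + 1) le_add_self, Nat.add_sub_cancel, eq_denom_of_rec hq0 hq1 hqrec (n + 1),
      eq_denom_of_rec hq0 hq1 hqrec n]
    simp [denom]

theorem denom_succ_pos (ha : ∀ i, 1 ≤ a i) : ∀ n, 0 < denom a (n + 1)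
  | 0 => Nat.one_pos
  | n + 1 => Nat.add_pos_left (Nat.mul_pos (ha _) (denom_succ_pos ha n)) _

theorem denom_le_denom_succ (ha : ∀ i, 1 ≤ a i) : ∀ n, denom a n ≤ denom a (n + 1)
  | 0 => Nat.zero_le _
  | _ + 1 => le_add_right (Nat.le_mul_of_pos_left _ (ha _))

theorem le_denom_succ (ha : ∀ i, 1 ≤ a i) : ∀ n, n ≤ denom a (n + 1)
  | 0 => Nat.zero_le _
  | 1 => denom_succ_pos ha 1
  | n + 2 => by
    have h₁ : n + 1 ≤ denom a (n + 2) := le_denom_succ ha (n + 1)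
    have h₂ := denom_succ_pos ha n
    have h₃ : denom a (n + 2) ≤ a (n + 2) * denom a (n + 2) := Nat.le_mul_of_pos_left _ (ha _)
    show n + 2 ≤ a (n + 2) * denom a (n + 2) + denom a (n + 1)
    omega

theorem admissible_zero (ha : ∀ i, 1 ≤ a i) : Admissible a (0 : ℕ →₀ ℕ) where
  zero := rfl
  one_lt := ha 1
  le _ _ := Nat.zero_le _
  eq_zero_of_eq _ _ _ := rfl

namespace Admissible

variable {b : ℕ → ℕ}

theorem sum_lt (hb : Admissible a b) : ∀ z, ∑ j ∈ range (z + 1), b j * denom a j < denom a (z + 1)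
  | 0 => by simp [denom]
  | 1 => by simpa [sum_range_succ, denom] using hb.one_lt
  | z + 2 => by
    have ih₁ : ∑ j ∈ range (z + 2), b j * denom a j < denom a (z + 2) := hb.sum_lt (z + 1)
    show _ < a (z + 2) * denom a (z + 2) + denom a (z + 1)
    rw [sum_range_succ]
    rcases (hb.le (z + 2) le_add_self).lt_or_eq with hlt | heq
    · have := Nat.mul_le_mul_right (denom a (z + 2)) hlt
      rw [Nat.succ_mul] at this
      omega
    · have ih₀ := hb.sum_lt z
      have hz : b (z + 1) = 0 := hb.eq_zero_of_eq (z + 2) le_add_self heq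
      rw [sum_range_succ, hz, zero_mul, add_zero, heq]
      omega

theorem sum_div_mod (hb : Admissible a b) (z : ℕ) :
    (∑ j ∈ range (z + 2), b j * denom a j) / denom a (z + 1) = b (z + 1) ∧
      (∑ j ∈ range (z + 2), b j * denom a j) % denom a (z + 1) =
        ∑ j ∈ range (z + 1), b j * denom a j := by
  have hlt := hb.sum_lt z
  have hsum : ∑ j ∈ range (z + 2), b j * denom a j =
      ∑ j ∈ range (z + 1), b j * denom a j + b (z + 1) * denom a (z + 1) := sum_range_succ _ _
  rw [Nat.div_mod_unique (by omega), hsum, mul_comm]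
  exact ⟨rfl, hlt⟩

theorem eq_of_sum_eq {c : ℕ → ℕ} (hb : Admissible a b) (hc : Admissible a c) :
    ∀ z, ∑ j ∈ range (z + 1), b j * denom a j = ∑ j ∈ range (z + 1), c j * denom a j →
      ∀ j ∈ range (z + 1), b j = c j
  | 0, _, j, hj => by
    obtain rfl : j = 0 := by simpa using hj
    rw [hb.zero, hc.zero]
  | z + 1, h, j, hj => by
    obtain ⟨hbd, hbm⟩ := hb.sum_div_mod z
    obtain ⟨hcd, hcm⟩ := hc.sum_div_mod z
    rw [h] at hbd hbm
    rcases mem_range_succ_iff.1 hj |>.lt_or_eq with hj | rfl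
    · exact hb.eq_of_sum_eq hc z (hbm.symm.trans hcm) j (mem_range.2 hj)
    · exact hbd.symm.trans hcd

theorem update (ha : ∀ i, 1 ≤ a i) {c : ℕ →₀ ℕ} (hc : Admissible a c) {n d : ℕ}
    (hn : 1 ≤ n) (hcn : ∀ j, n ≤ j → c j = 0) (hd₁ : n = 1 → d < a 1) (hd : d ≤ a n)
    (hda : d = a n → c (n - 1) = 0) : Admissible a (c.update n d) := by
  classical
  simp only [Finsupp.coe_update]
  refine ⟨?_, ?_, fun j hj => ?_, fun j hj hja => ?_⟩
  · rw [Function.update_of_ne (by omega)]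
    exact hc.zero
  · rcases eq_or_ne 1 n with rfl | h1
    · simpa using hd₁ rfl
    · rw [Function.update_of_ne h1]
      exact hc.one_lt
  · rcases eq_or_ne j n with rfl | hjn
    · simpa using hd
    · rw [Function.update_of_ne hjn]
      exact hc.le j hj
  · rcases eq_or_ne j n with rfl | hjn
    · rw [Function.update_of_ne (by omega)]
      exact hda (by simpa using hja)
    · rw [Function.update_of_ne hjn] at hja
      rcases eq_or_ne (j - 1) n with hj1 | hj1
      · -- digits above `n` vanish, while `a j ≥ 1`
        have := ha j
        have := hcn j (by omega)
        omega
      · rw [Function.update_of_ne hj1]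
        exact hc.eq_zero_of_eq j hj hja

end Admissible

theorem sum_range_succ_update (c : ℕ → ℕ) (n d : ℕ) :
    ∑ j ∈ range (n + 1), Function.update c n d j * denom a j =
      ∑ j ∈ range n, c j * denom a j + d * denom a n := by
  rw [sum_range_succ, Function.update_self]
  congr 1
  refine sum_congr rfl fun j hj => ?_
  rw [Function.update_of_ne (mem_range.1 hj).ne]

theorem exists_admissible_sum_eq (ha : ∀ i, 1 ≤ a i) :
    ∀ z N, N < denom a (z + 1) → ∃ b : ℕ →₀ ℕ, Admissible a b ∧ (∀ j, z < j → b j = 0) ∧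
      ∑ j ∈ range (z + 1), b j * denom a j = N
  | 0, N, hN => ⟨0, admissible_zero ha, fun _ _ => rfl, by simp [denom] at hN ⊢; omega⟩
  | 1, N, hN => by
    classical
    have hN' : N < a 1 := by simpa [denom] using hN
    refine ⟨(0 : ℕ →₀ ℕ).update 1 N, (admissible_zero ha).update ha le_rfl (fun _ _ => rfl)
      (fun _ => hN') hN'.le (fun _ => rfl), fun j hj => ?_, ?_⟩
    · rw [Finsupp.coe_update, Function.update_of_ne (by omega)]
      rfl
    · rw [Finsupp.coe_update, sum_range_succ_update]
      simp [denom]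
  | z + 2, N, hN => by
    classical
    have hD : 0 < denom a (z + 2) := denom_succ_pos ha (z + 1)
    have hN' : N < a (z + 2) * denom a (z + 2) + denom a (z + 1) := hN
    have hdr := Nat.div_add_mod' N (denom a (z + 2))
    have hr : N % denom a (z + 2) < denom a (z + 2) := Nat.mod_lt N hD
    have hd : N / denom a (z + 2) ≤ a (z + 2) := by
      have : denom a (z + 1) ≤ denom a (z + 2) := denom_le_denom_succ ha (z + 1)
      refine Nat.lt_succ_iff.1 ((Nat.div_lt_iff_lt_mul hD).2 ?_)
      rw [Nat.succ_mul]
      omega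
    obtain ⟨c, hc, hcz, hcN, hca⟩ : ∃ c : ℕ →₀ ℕ, Admissible a c ∧ (∀ j, z + 2 ≤ j → c j = 0) ∧
        ∑ j ∈ range (z + 2), c j * denom a j = N % denom a (z + 2) ∧
        (N / denom a (z + 2) = a (z + 2) → c (z + 1) = 0) := by
      by_cases hmax : N / denom a (z + 2) = a (z + 2)
      · have hr' : N % denom a (z + 2) < denom a (z + 1) := by
          rw [hmax] at hdr
          omega
        obtain ⟨c, hc, hcz, hcN⟩ := exists_admissible_sum_eq ha z (N % denom a (z + 2)) hr'
        have hc1 : c (z + 1) = 0 := hcz _ (lt_add_one z)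
        refine ⟨c, hc, fun j hj => hcz j (by omega), ?_, fun _ => hc1⟩
        rw [sum_range_succ, hc1, zero_mul, add_zero, hcN]
      · obtain ⟨c, hc, hcz, hcN⟩ := exists_admissible_sum_eq ha (z + 1) (N % denom a (z + 2)) hr
        exact ⟨c, hc, fun j hj => hcz j (by omega), hcN, fun h => absurd h hmax⟩
    refine ⟨c.update (z + 2) (N / denom a (z + 2)), hc.update ha (by omega) hcz (by omega) hd hca,
      fun j hj => ?_, ?_⟩
    · rw [Finsupp.coe_update, Function.update_of_ne (by omega)]
      exact hcz j (by omega)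
    · rw [Finsupp.coe_update, sum_range_succ_update, hcN]
      omega

theorem existsUnique_admissible_sum_eq (ha : ∀ i, 1 ≤ a i) (N : ℕ) :
    ∃! b : ℕ →₀ ℕ, Admissible a b ∧ b.sum (fun j d => d * denom a j) = N := by
  obtain ⟨b, hb, hbz, hbN⟩ :=
    exists_admissible_sum_eq ha (N + 1) N (Nat.lt_of_lt_of_le N.lt_succ_self (le_denom_succ ha _))
  have hsupp : b.support ⊆ range (N + 2) := fun j hj => by
    by_contra h
    exact Finsupp.mem_support_iff.1 hj (hbz j (by simp at h; omega))
  have hbN' : b.sum (fun j d => d * denom a j) = N := by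
    rwa [Finsupp.sum_of_support_subset b hsupp (fun j d => d * denom a j) fun _ _ => zero_mul _]
  refine ⟨b, ⟨hb, hbN'⟩, fun c ⟨hc, hcN⟩ => ?_⟩
  set z := (c.support ∪ b.support).sup id
  have hs : c.support ∪ b.support ⊆ range (z + 1) := subset_range_sup_succ _
  have hcs : c.support ⊆ range (z + 1) := subset_union_left.trans hs
  have hbs : b.support ⊆ range (z + 1) := subset_union_right.trans hs
  rw [Finsupp.sum_of_support_subset c hcs (fun j d => d * denom a j) fun _ _ => zero_mul _]
    at hcN
  rw [Finsupp.sum_of_support_subset b hbs (fun j d => d * denom a j) fun _ _ => zero_mul _]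
    at hbN'
  have hcb := hc.eq_of_sum_eq hb z (hcN.trans hbN'.symm)
  ext j
  by_cases hj : j ∈ range (z + 1)
  · exact hcb j hj
  · rw [Finsupp.notMem_support_iff.1 fun h => hj (hcs h),
      Finsupp.notMem_support_iff.1 fun h => hj (hbs h)]

end Ostrowski

theorem stmt_7_general
    (a : ℕ → ℕ) (ha : ∀ i, 1 ≤ a i)
    (q : ℕ → ℤ)
    (hq0 : q 0 = 0) (hq1 : q 1 = 1)
    (hqrec : ∀ n, 1 ≤ n → q (n + 1) = a n * q n + q (n - 1))
    (N : ℕ) :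
    ∃! b : ℕ →₀ ℕ,
      b 0 = 0 ∧
      b 1 ≤ a 1 - 1 ∧
      (∀ j, 2 ≤ j → b j ≤ a j) ∧
      (∀ j, 2 ≤ j → b j = a j → b (j - 1) = 0) ∧
      (N : ℤ) = ∑ j ∈ b.support, (b j : ℤ) * q j := by
  have hq : ∀ n, q n = Ostrowski.denom a n := Ostrowski.eq_denom_of_rec hq0 hq1 hqrec
  refine (existsUnique_congr fun b => ?_).1 (Ostrowski.existsUnique_admissible_sum_eq ha N)
  have hsum : ∑ j ∈ b.support, (b j : ℤ) * q j =
      ((b.sum fun j d => d * Ostrowski.denom a j : ℕ) : ℤ) := by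
    simp [Finsupp.sum, hq]
  have := ha 1
  constructor
  · rintro ⟨⟨h0, h1, hle, hzero⟩, hN⟩
    exact ⟨h0, by omega, hle, hzero, by rw [hsum, hN]⟩
  · rintro ⟨h0, h1, hle, hzero, hN⟩
    exact ⟨⟨h0, by omega, hle, hzero⟩, by rw [hsum] at hN; exact_mod_cast hN.symm⟩

/-- Ostrowski representation: every `N ≥ 1` has a unique expansion
`N = ∑_{j=1}^z b j * q j` with `b 1 ≤ a 1 - 1`, `b j ≤ a j` for `j > 1`, and
`b j = a j → b (j-1) = 0`.  The digits are encoded as a finitely supported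
function `b : ℕ →₀ ℕ` supported in indices `≥ 1`. -/
theorem stmt_7 (α : ℝ) (hirr : Irrational α) (h0 : 0 < α) (h1 : α < 1)
    (a : ℕ → ℕ) (ha : ∀ i, 1 ≤ a i)
    (q p : ℕ → ℤ)
    (hq0 : q 0 = 0) (hq1 : q 1 = 1)
    (hqrec : ∀ n, 1 ≤ n → q (n + 1) = a n * q n + q (n - 1))
    (hp0 : p 0 = 1) (hp1 : p 1 = 0)
    (hprec : ∀ n, 1 ≤ n → p (n + 1) = a n * p n + p (n - 1))
    (hlim : Filter.Tendsto (fun n => (p n : ℝ) / q n) Filter.atTop (nhds α))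
    (N : ℕ) (hN : 1 ≤ N) :
    ∃! b : ℕ →₀ ℕ,
      b 0 = 0 ∧
      b 1 ≤ a 1 - 1 ∧
      (∀ j, 2 ≤ j → b j ≤ a j) ∧
      (∀ j, 2 ≤ j → b j = a j → b (j - 1) = 0) ∧
      (N : ℤ) = ∑ j ∈ b.support, (b j : ℤ) * q j :=
  stmt_7_general a ha q hq0 hq1 hqrec N
end

section
/- Let α = [0; a_1, a_2, ...] be irrational with coefficients bounded by M = max_j a_j, and suppose Lubinsky's bound holds: for every n with Ostrowski expansion n = ∑_{j=1}^z b_j q_j, log P_n(α) ≤ 800 z# + 151 ∑_j (b_j/a_j) max_{k<j} log a_k + (3/2)∑_j log⁺ b_j + ∑_j b_j log(2π b_j q_j |q_j α − p_j|/e), where z# is the number of nonzero b_j. If M is sufficiently large and a_j ≥ K(M) infinitely often where K satisfies 802 + 151(log M)/K − log K < 0, then liminf_{n→∞} P_n(α) = 0. -/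
open Real Finset Filter

/-!
Pick `m` indices `j ≥ 2` with `a j ≥ K` and let `n` be the sum of their `q j`. This is an
Ostrowski expansion with digits in `{0, 1}` (no carries since `K ≥ 2`), and each chosen index adds
at most `800 + 151 log M / K + log (2π/e) - log K ≤ 802 + 151 log M / K - log K` to Lubinsky's
bound, because `q j |q j α - p j| ≤ q j / q (j + 1) ≤ 1 / a j ≤ 1 / K`. Hence
`P_n(α) ≤ exp (m c)` with `c < 0` and `n ≥ m`.
-/

/-- `p j / q j = [0; a 1, …, a (j - 1)]`; in particular `q 1 = 1` is the first denominator. -/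
structure IsConvergents (a : ℕ → ℕ) (q p : ℕ → ℤ) : Prop where
  q_zero : q 0 = 0
  q_one : q 1 = 1
  q_succ : ∀ n, 1 ≤ n → q (n + 1) = a n * q n + q (n - 1)
  p_zero : p 0 = 1
  p_one : p 1 = 0
  p_succ : ∀ n, 1 ≤ n → p (n + 1) = a n * p n + p (n - 1)

namespace IsConvergents

variable {a : ℕ → ℕ} {q p : ℕ → ℤ}

theorem q_pos (h : IsConvergents a q p) (ha : ∀ i, 1 ≤ a i) {j : ℕ} (hj : 1 ≤ j) :
    0 < q j := by
  suffices ∀ j, 1 ≤ j → 0 < q j ∧ 0 < q (j + 1) from (this j hj).1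
  intro j hj
  induction j, hj using Nat.le_induction with
  | base =>
    simp only [h.q_succ 1 le_rfl, h.q_one, h.q_zero, Nat.sub_self]
    exact ⟨one_pos, by simpa using Int.natCast_pos.mpr (ha 1)⟩
  | succ j hj ih =>
    refine ⟨ih.2, ?_⟩
    rw [h.q_succ (j + 1) (by omega), Nat.add_sub_cancel]
    nlinarith [ih.1, ih.2, (by exact_mod_cast ha (j + 1) : (1 : ℤ) ≤ a (j + 1))]

theorem q_nonneg (h : IsConvergents a q p) (ha : ∀ i, 1 ≤ a i) (j : ℕ) : 0 ≤ q j := by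
  rcases j with _ | j
  · exact h.q_zero.ge
  · exact (h.q_pos ha (Nat.succ_pos j)).le

theorem cast_q_pos (h : IsConvergents a q p) (ha : ∀ i, 1 ≤ a i) {j : ℕ} (hj : 1 ≤ j) :
    (0 : ℝ) < q j :=
  Int.cast_pos.mpr (h.q_pos ha hj)

theorem mul_le_q_succ (h : IsConvergents a q p) (ha : ∀ i, 1 ≤ a i) {j : ℕ} (hj : 1 ≤ j) :
    a j * q j ≤ q (j + 1) := by
  rw [h.q_succ j hj]
  linarith [h.q_nonneg ha (j - 1)]

theorem q_le_q_succ (h : IsConvergents a q p) (ha : ∀ i, 1 ≤ a i) {j : ℕ} (hj : 1 ≤ j) :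
    q j ≤ q (j + 1) := by
  have : (1 : ℤ) ≤ a j := by exact_mod_cast ha j
  nlinarith [h.mul_le_q_succ ha hj, h.q_nonneg ha j]

theorem det (h : IsConvergents a q p) (j : ℕ) :
    p (j + 1) * q j - p j * q (j + 1) = (-1) ^ (j + 1) := by
  induction j with
  | zero => simp [h.p_zero, h.p_one, h.q_zero, h.q_one]
  | succ j ih =>
    rw [h.p_succ (j + 1) (by omega), h.q_succ (j + 1) (by omega), Nat.add_sub_cancel, pow_succ,
      ← ih]
    ring

theorem convergent_succ_sub (h : IsConvergents a q p) (ha : ∀ i, 1 ≤ a i) {j : ℕ}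
    (hj : 1 ≤ j) :
    (p (j + 1) : ℝ) / q (j + 1) - p j / q j = (-1) ^ (j + 1) / (q j * q (j + 1)) := by
  have hdet : ((p (j + 1) * q j - p j * q (j + 1) : ℤ) : ℝ) = (-1) ^ (j + 1) := by
    rw [h.det]; push_cast; rfl
  rw [div_sub_div _ _ (h.cast_q_pos ha (by omega)).ne' (h.cast_q_pos ha hj).ne', ← hdet]
  push_cast
  ring

theorem sign_mul_convergent_add_two_sub_nonneg (h : IsConvergents a q p) (ha : ∀ i, 1 ≤ a i)
    {j : ℕ} (hj : 1 ≤ j) :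
    0 ≤ (-1 : ℝ) ^ (j + 1) * ((p (j + 2) : ℝ) / q (j + 2) - p j / q j) := by
  have hs : (-1 : ℝ) ^ (j + 1) * (-1) ^ (j + 1) = 1 := by
    rw [← pow_add, ← two_mul, pow_mul, neg_one_sq, one_pow]
  have hq₂ : (q (j + 1) : ℝ) ≤ q (j + 2) := by exact_mod_cast h.q_le_q_succ ha (by omega)
  have e₁ := h.convergent_succ_sub ha hj
  have e₂ := h.convergent_succ_sub ha (show 1 ≤ j + 1 by omega)
  rw [pow_succ] at e₂
  have key : (-1 : ℝ) ^ (j + 1) * ((p (j + 2) : ℝ) / q (j + 2) - p j / q j) =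
      1 / (q j * q (j + 1)) - 1 / (q (j + 1) * q (j + 2)) := by
    rw [show (p (j + 2) : ℝ) / q (j + 2) - p j / q j
        = ((p (j + 1 + 1) : ℝ) / q (j + 1 + 1) - p (j + 1) / q (j + 1))
          + ((p (j + 1) : ℝ) / q (j + 1) - p j / q j) by ring, e₁, e₂]
    linear_combination (1 / (q j * q (j + 1)) - 1 / (q (j + 1) * q (j + 2)) : ℝ) * hs
  have hq₀ := h.cast_q_pos ha hj
  have hq₁ := h.cast_q_pos ha (show 1 ≤ j + 1 by omega)
  rw [key, sub_nonneg]
  gcongr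
  exact h.q_le_q_succ ha hj

theorem sign_mul_sub_convergent_nonneg (h : IsConvergents a q p) (ha : ∀ i, 1 ≤ a i) {α : ℝ}
    (hlim : Tendsto (fun n => (p n : ℝ) / q n) atTop (nhds α)) {j : ℕ} (hj : 1 ≤ j) :
    0 ≤ (-1 : ℝ) ^ (j + 1) * (α - p j / q j) := by
  -- `k ↦ ± p (j + 2k) / q (j + 2k)` increases to its limit `± α`.
  have hmono : Monotone fun k => (-1 : ℝ) ^ (j + 1) * ((p (j + 2 * k) : ℝ) / q (j + 2 * k)) := by
    refine monotone_nat_of_le_succ fun k => ?_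
    have hsign : (-1 : ℝ) ^ (j + 2 * k + 1) = (-1) ^ (j + 1) := by
      rw [show j + 2 * k + 1 = j + 1 + 2 * k by omega, pow_add, pow_mul, neg_one_sq, one_pow,
        mul_one]
    have := h.sign_mul_convergent_add_two_sub_nonneg ha (show 1 ≤ j + 2 * k by omega)
    rw [hsign, mul_sub, sub_nonneg] at this
    simpa only [show j + 2 * (k + 1) = j + 2 * k + 2 by ring] using this
  have hsub : Tendsto (fun k : ℕ => j + 2 * k) atTop atTop := by
    refine tendsto_atTop_mono (fun k => ?_) tendsto_id
    dsimp; omega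
  have := hmono.ge_of_tendsto ((hlim.comp hsub).const_mul _) 0
  simp only [mul_zero, add_zero] at this
  rw [mul_sub, sub_nonneg]
  exact this

theorem abs_sub_convergent_le (h : IsConvergents a q p) (ha : ∀ i, 1 ≤ a i) {α : ℝ}
    (hlim : Tendsto (fun n => (p n : ℝ) / q n) atTop (nhds α)) {j : ℕ} (hj : 1 ≤ j) :
    |α - p j / q j| ≤ 1 / (q j * q (j + 1)) := by
  have hs : (-1 : ℝ) ^ (j + 1) * (-1) ^ (j + 1) = 1 := by
    rw [← pow_add, ← two_mul, pow_mul, neg_one_sq, one_pow]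
  have h₀ := h.sign_mul_sub_convergent_nonneg ha hlim hj
  have h₁ := h.sign_mul_sub_convergent_nonneg ha hlim (show 1 ≤ j + 1 by omega)
  have e := h.convergent_succ_sub ha hj
  rw [pow_succ] at h₁
  calc |α - p j / q j| = (-1 : ℝ) ^ (j + 1) * (α - p j / q j) := by
        rw [← abs_of_nonneg h₀, abs_mul, abs_pow, abs_neg, abs_one, one_pow, one_mul]
    _ ≤ (-1 : ℝ) ^ (j + 1) * ((p (j + 1) : ℝ) / q (j + 1) - p j / q j) := by linarith
    _ = 1 / (q j * q (j + 1)) := by rw [e, ← mul_div_assoc, hs]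

theorem q_mul_abs_sub_le (h : IsConvergents a q p) (ha : ∀ i, 1 ≤ a i) {α : ℝ}
    (hlim : Tendsto (fun n => (p n : ℝ) / q n) atTop (nhds α)) {j : ℕ} (hj : 1 ≤ j) :
    q j * |q j * α - p j| ≤ 1 / a j := by
  have hq₀ := h.cast_q_pos ha hj
  have hq₁ := h.cast_q_pos ha (show 1 ≤ j + 1 by omega)
  have haj : (0 : ℝ) < a j := by exact_mod_cast ha j
  have hgrowth : (a j : ℝ) * q j ≤ q (j + 1) := by exact_mod_cast h.mul_le_q_succ ha hj
  calc (q j : ℝ) * |q j * α - p j| = q j ^ 2 * |α - p j / q j| := by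
        rw [show (q j : ℝ) * α - p j = q j * (α - p j / q j) by field_simp, abs_mul,
          abs_of_pos hq₀]
        ring
    _ ≤ q j ^ 2 * (1 / (q j * q (j + 1))) := by gcongr; exact h.abs_sub_convergent_le ha hlim hj
    _ = q j / q (j + 1) := by field_simp
    _ ≤ 1 / a j := by rw [div_le_div_iff₀ hq₁ haj]; linarith

end IsConvergents

theorem Irrational.int_mul_sub_int_ne_zero {α : ℝ} (hα : Irrational α) {m : ℤ} (hm : m ≠ 0)
    (k : ℤ) : m * α - k ≠ 0 :=
  ((hα.intCast_mul hm).sub_intCast k).ne_zero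

theorem Finset.sum_le_card_nsmul_of_nonpos_off {ι M : Type*} [DecidableEq ι] [AddCommMonoid M]
    [PartialOrder M] [IsOrderedAddMonoid M] {s t : Finset ι} (hst : s ⊆ t) {f : ι → M} {C : M}
    (hs : ∀ i ∈ s, f i ≤ C) (ht : ∀ i ∈ t \ s, f i ≤ 0) :
    ∑ i ∈ t, f i ≤ #s • C := by
  rw [← sum_sdiff hst]
  simpa using add_le_add (sum_nonpos ht) (sum_le_card_nsmul s f C hs)

theorem Real.log_natCast_le_log_natCast {m n : ℕ} (h : m ≤ n) : log m ≤ log n := by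
  rcases m.eq_zero_or_pos with rfl | hm
  · simpa using log_natCast_nonneg n
  · exact log_le_log (by exact_mod_cast hm) (by exact_mod_cast h)

theorem Real.log_two_mul_pi_div_exp_one_le : log (2 * π / exp 1) ≤ 2 := by
  have he := exp_one_gt_d9
  have hπ := pi_lt_d2
  have h3 : 2 * π / exp 1 ≤ 3 := by rw [div_le_iff₀ (exp_pos 1)]; norm_num at he hπ ⊢; linarith
  linarith [log_le_sub_one_of_pos (show 0 < 2 * π / exp 1 by positivity)]

noncomputable def sineProduct (α : ℝ) (n : ℕ) : ℝ := ∏ r ∈ Icc 1 n, |2 * sin (π * r * α)|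

noncomputable def lubinskyBound (α : ℝ) (a : ℕ → ℕ) (q p : ℕ → ℤ) (z : ℕ) (b : ℕ → ℕ) : ℝ :=
  800 * ((Icc 1 z).filter (fun j => b j ≠ 0)).card
    + 151 * ∑ j ∈ Icc 1 z, ((b j : ℝ) / a j) * log (((Ico 1 j).sup a : ℕ))
    + (3 / 2) * ∑ j ∈ Icc 1 z, max (log (b j)) 0
    + ∑ j ∈ Icc 1 z, (b j : ℝ) * log (2 * π * b j * q j * |(q j : ℝ) * α - p j| / exp 1)

/-- The conditions on `b` say that `n = ∑ j ∈ Icc 1 z, b j * q j` is the Ostrowski expansion. -/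
def LubinskyHolds (α : ℝ) (a : ℕ → ℕ) (q p : ℕ → ℤ) : Prop :=
  ∀ (n z : ℕ) (b : ℕ → ℕ), 1 ≤ n → 1 ≤ z → b 1 ≤ a 1 - 1 → (∀ j, 2 ≤ j → b j ≤ a j) →
    (∀ j, 2 ≤ j → b j = a j → b (j - 1) = 0) → (n : ℤ) = ∑ j ∈ Icc 1 z, (b j : ℤ) * q j →
    log (sineProduct α n) ≤ lubinskyBound α a q p z b

theorem lubinskyBound_indicator_le {α : ℝ} {a : ℕ → ℕ} {q p : ℕ → ℤ} {M K : ℕ}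
    (hM : ∀ j, a j ≤ M) (hK : 0 < K) {S : Finset ℕ} {z : ℕ} (hSz : S ⊆ Icc 1 z)
    (hSa : ∀ j ∈ S, K ≤ a j)
    (happrox : ∀ j ∈ S, 0 < q j * |q j * α - p j| ∧ q j * |q j * α - p j| ≤ 1 / a j) :
    lubinskyBound α a q p z (fun j => if j ∈ S then 1 else 0) ≤
      #S * (802 + 151 * log M / K - log K) := by
  have hK' : (0 : ℝ) < K := by exact_mod_cast hK
  have hcard : ((Icc 1 z).filter fun j => (if j ∈ S then 1 else 0) ≠ 0) = S := by
    ext j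
    simpa using fun hj => hSz hj
  have hdigit : ∀ j ∈ S, log ((Ico 1 j).sup a : ℕ) / a j ≤ log M / K := fun j hj =>
    div_le_div₀ (log_natCast_nonneg M) (log_natCast_le_log_natCast (Finset.sup_le fun i _ => hM i))
      hK' (by exact_mod_cast hSa j hj)
  have hsecond : ∑ j ∈ Icc 1 z, (((if j ∈ S then 1 else 0 : ℕ) : ℝ) / a j) *
      log ((Ico 1 j).sup a : ℕ) ≤ #S • (log M / K) :=
    sum_le_card_nsmul_of_nonpos_off hSz (fun j hj => by simpa [hj, div_eq_inv_mul] using hdigit j hj)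
      (fun j hj => by simp [(mem_sdiff.1 hj).2])
  have hthird : ∑ j ∈ Icc 1 z, max (log ((if j ∈ S then 1 else 0 : ℕ) : ℝ)) 0 = 0 :=
    sum_eq_zero fun j _ => by split_ifs <;> simp
  have hterm : ∀ j ∈ S, log (2 * π * q j * |q j * α - p j| / exp 1) ≤ 2 - log K := by
    intro j hj
    obtain ⟨hpos, hle⟩ := happrox j hj
    have hle' : (q j : ℝ) * |q j * α - p j| ≤ 1 / K :=
      hle.trans (one_div_le_one_div_of_le hK' (by exact_mod_cast hSa j hj))
    rw [show 2 * π * q j * |q j * α - p j| / exp 1 = 2 * π / exp 1 * (q j * |q j * α - p j|) by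
      ring]
    calc log (2 * π / exp 1 * (q j * |q j * α - p j|))
        ≤ log (2 * π / exp 1 * (1 / K)) := log_le_log (mul_pos (by positivity) hpos) (by gcongr)
      _ = log (2 * π / exp 1) - log K := by
          rw [log_mul (by positivity) (by positivity), one_div, log_inv]; ring
      _ ≤ 2 - log K := by linarith [log_two_mul_pi_div_exp_one_le]
  have hfourth : ∑ j ∈ Icc 1 z, ((if j ∈ S then 1 else 0 : ℕ) : ℝ) * log (2 * π *
      ((if j ∈ S then 1 else 0 : ℕ) : ℝ) * q j * |(q j : ℝ) * α - p j| / exp 1) ≤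
      #S • (2 - log K) :=
    sum_le_card_nsmul_of_nonpos_off hSz (fun j hj => by simpa [hj] using hterm j hj)
      (fun j hj => by simp [(mem_sdiff.1 hj).2])
  rw [nsmul_eq_mul] at hsecond hfourth
  unfold lubinskyBound
  beta_reduce
  rw [hcard, hthird]
  linear_combination 151 * hsecond + hfourth

theorem exists_sineProduct_le {α : ℝ} (hirr : Irrational α) {a : ℕ → ℕ} (ha : ∀ i, 1 ≤ a i)
    {q p : ℕ → ℤ} (hc : IsConvergents a q p)
    (hlim : Tendsto (fun n => (p n : ℝ) / q n) atTop (nhds α)) (hL : LubinskyHolds α a q p)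
    {M K : ℕ} (hM : ∀ j, a j ≤ M) (hK : 2 ≤ K) {S : Finset ℕ} (hS : S.Nonempty)
    (hSa : ∀ j ∈ S, 2 ≤ j ∧ K ≤ a j) :
    ∃ n, #S ≤ n ∧ sineProduct α n ≤ exp (#S * (802 + 151 * log M / K - log K)) := by
  set b : ℕ → ℕ := fun j => if j ∈ S then 1 else 0
  set z := S.sup id
  have hSz : S ⊆ Icc 1 z := fun j hj =>
    mem_Icc.2 ⟨by linarith [(hSa j hj).1], le_sup (f := id) hj⟩
  have hz : 1 ≤ z := by
    obtain ⟨j, hj⟩ := hS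
    exact (mem_Icc.1 (hSz hj)).1.trans (mem_Icc.1 (hSz hj)).2
  have hsum : ∑ j ∈ Icc 1 z, (b j : ℤ) * q j = ∑ j ∈ S, q j := by
    simp only [b, Nat.cast_ite, Nat.cast_one, Nat.cast_zero, ite_mul, one_mul, zero_mul,
      sum_ite_mem, inter_eq_right.2 hSz]
  have hcard : (#S : ℤ) ≤ ∑ j ∈ S, q j := by
    simpa using card_nsmul_le_sum S q 1 fun j hj => hc.q_pos ha (by linarith [(hSa j hj).1])
  set n := (∑ j ∈ S, q j).toNat
  have hn : (n : ℤ) = ∑ j ∈ S, q j := Int.toNat_of_nonneg ((Int.natCast_nonneg _).trans hcard)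
  have hSn : #S ≤ n := by omega
  refine ⟨n, hSn, ?_⟩
  have hb1 : b 1 ≤ a 1 - 1 := by
    simp only [b, if_neg fun h => absurd (hSa 1 h).1 (by norm_num), zero_le]
  have hb_le_one : ∀ j, b j ≤ 1 := fun j => by simp only [b]; split_ifs <;> simp
  have hb_ne : ∀ j, b j ≠ a j := fun j => by
    simp only [b]; split_ifs with hj
    · linarith [(hSa j hj).2]
    · exact (Nat.one_le_iff_ne_zero.1 (ha j)).symm
  have hlog := hL n z b (hS.card_pos.trans_le hSn) hz hb1
    (fun j _ => (hb_le_one j).trans (ha j)) (fun j _ h => absurd h (hb_ne j)) (hn.trans hsum.symm)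
  have happrox : ∀ j ∈ S, 0 < q j * |q j * α - p j| ∧ q j * |q j * α - p j| ≤ 1 / a j := by
    intro j hj
    have hj1 : 1 ≤ j := by linarith [(hSa j hj).1]
    exact ⟨mul_pos (hc.cast_q_pos ha hj1) (abs_pos.2
      (hirr.int_mul_sub_int_ne_zero (hc.q_pos ha hj1).ne' (p j))), hc.q_mul_abs_sub_le ha hlim hj1⟩
  calc sineProduct α n ≤ exp (log (sineProduct α n)) := le_exp_log _
    _ ≤ _ := exp_le_exp.2 (hlog.trans (lubinskyBound_indicator_le hM (by omega) hSz
      (fun j hj => (hSa j hj).2) happrox))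

theorem liminf_eq_zero_of_frequently_le {F : ℕ → ℝ} (hF : ∀ n, 0 ≤ F n)
    (h : ∀ ε > 0, ∃ᶠ n in atTop, F n ≤ ε) : liminf F atTop = 0 := by
  refine le_antisymm (le_of_forall_pos_le_add fun ε hε => ?_)
    (le_liminf_of_le (IsCoboundedUnder.of_frequently_le (h 1 one_pos)) (Eventually.of_forall hF))
  rw [zero_add]
  exact liminf_le_of_frequently_le (h ε hε) (isBoundedUnder_of ⟨0, hF⟩)

theorem stmt_16_general (α : ℝ) (hirr : Irrational α)
    (a : ℕ → ℕ) (ha : ∀ i, 1 ≤ a i)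
    (M : ℕ) (hM : ∀ j, a j ≤ M)
    (q p : ℕ → ℤ)
    (hq0 : q 0 = 0) (hq1 : q 1 = 1)
    (hqrec : ∀ n, 1 ≤ n → q (n + 1) = a n * q n + q (n - 1))
    (hp0 : p 0 = 1) (hp1 : p 1 = 0)
    (hprec : ∀ n, 1 ≤ n → p (n + 1) = a n * p n + p (n - 1))
    (hlim : Filter.Tendsto (fun n => (p n : ℝ) / q n) Filter.atTop (nhds α))
    (hLubinsky : ∀ (n z : ℕ) (b : ℕ → ℕ), 1 ≤ n → 1 ≤ z →
      b 1 ≤ a 1 - 1 →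
      (∀ j, 2 ≤ j → b j ≤ a j) →
      (∀ j, 2 ≤ j → b j = a j → b (j - 1) = 0) →
      (n : ℤ) = ∑ j ∈ Finset.Icc 1 z, (b j : ℤ) * q j →
      Real.log (∏ r ∈ Finset.Icc 1 n, |2 * Real.sin (Real.pi * r * α)|) ≤
        800 * ((Finset.Icc 1 z).filter (fun j => b j ≠ 0)).card
        + 151 * ∑ j ∈ Finset.Icc 1 z,
            ((b j : ℝ) / a j) * Real.log (((Finset.Ico 1 j).sup a : ℕ))
        + (3 / 2) * ∑ j ∈ Finset.Icc 1 z, max (Real.log (b j)) 0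
        + ∑ j ∈ Finset.Icc 1 z,
            (b j : ℝ) * Real.log (2 * Real.pi * b j * q j * |(q j : ℝ) * α - p j| / Real.exp 1))
    (K : ℕ)
    (hKineq : 802 + 151 * Real.log M / K - Real.log K < 0)
    (hio : ∀ j : ℕ, ∃ j' : ℕ, j < j' ∧ K ≤ a j') :
    Filter.atTop.liminf
      (fun n : ℕ => ∏ r ∈ Finset.Icc 1 n, |2 * Real.sin (Real.pi * r * α)|) = 0 := by
  have hc : IsConvergents a q p := ⟨hq0, hq1, hqrec, hp0, hp1, hprec⟩
  have hK : 2 ≤ K := by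
    by_contra! hK
    have : log K ≤ 0 := log_nonpos (Nat.cast_nonneg K) (by exact_mod_cast (by omega : K ≤ 1))
    have : 0 ≤ 151 * log M / K := by have := log_natCast_nonneg M; positivity
    linarith
  have hlarge : {j | 2 ≤ j ∧ K ≤ a j}.Infinite := Set.infinite_of_forall_exists_gt fun j => by
    obtain ⟨j', hj', hKj'⟩ := hio (j + 1)
    exact ⟨j', ⟨by omega, hKj'⟩, by omega⟩
  have hdecay : Tendsto (fun m : ℕ => exp (m * (802 + 151 * log M / K - log K))) atTop (nhds 0) :=
    tendsto_exp_atBot.comp (tendsto_natCast_atTop_atTop.atTop_mul_const_of_neg hKineq)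
  refine liminf_eq_zero_of_frequently_le (fun n => prod_nonneg fun r _ => abs_nonneg _)
    fun ε hε => frequently_atTop.2 fun N => ?_
  obtain ⟨m, hm⟩ := eventually_atTop.1 (hdecay.eventually (ge_mem_nhds hε))
  obtain ⟨S, hSlarge, hScard⟩ := hlarge.exists_subset_card_eq (max m (max N 1))
  obtain ⟨n, hn, hprod⟩ := exists_sineProduct_le hirr ha hc hlim hLubinsky hM hK
    (card_pos.1 (by omega)) fun j hj => hSlarge hj
  rw [hScard] at hn hprod
  exact ⟨n, by omega, hprod.trans (hm _ (le_max_left _ _))⟩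

/-- Theorem 5 of the paper, conditional on Lubinsky's bound:
if `α` has continued fraction coefficients bounded by `M`, Lubinsky's upper
bound for `log P_n(α)` holds, and `a j ≥ K` infinitely often for some `K`
with `802 + 151 log M / K - log K < 0`, then `liminf P_n(α) = 0`. -/
theorem stmt_16 (α : ℝ) (hirr : Irrational α) (h0 : 0 < α) (h1 : α < 1)
    (a : ℕ → ℕ) (ha : ∀ i, 1 ≤ a i)
    (M : ℕ) (hM : ∀ j, a j ≤ M) (hMmax : ∃ j, a j = M)
    (q p : ℕ → ℤ)
    (hq0 : q 0 = 0) (hq1 : q 1 = 1)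
    (hqrec : ∀ n, 1 ≤ n → q (n + 1) = a n * q n + q (n - 1))
    (hp0 : p 0 = 1) (hp1 : p 1 = 0)
    (hprec : ∀ n, 1 ≤ n → p (n + 1) = a n * p n + p (n - 1))
    (hlim : Filter.Tendsto (fun n => (p n : ℝ) / q n) Filter.atTop (nhds α))
    (hLubinsky : ∀ (n z : ℕ) (b : ℕ → ℕ), 1 ≤ n → 1 ≤ z →
      b 1 ≤ a 1 - 1 →
      (∀ j, 2 ≤ j → b j ≤ a j) →
      (∀ j, 2 ≤ j → b j = a j → b (j - 1) = 0) →
      (n : ℤ) = ∑ j ∈ Finset.Icc 1 z, (b j : ℤ) * q j →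
      Real.log (∏ r ∈ Finset.Icc 1 n, |2 * Real.sin (Real.pi * r * α)|) ≤
        800 * ((Finset.Icc 1 z).filter (fun j => b j ≠ 0)).card
        + 151 * ∑ j ∈ Finset.Icc 1 z,
            ((b j : ℝ) / a j) * Real.log (((Finset.Ico 1 j).sup a : ℕ))
        + (3 / 2) * ∑ j ∈ Finset.Icc 1 z, max (Real.log (b j)) 0
        + ∑ j ∈ Finset.Icc 1 z,
            (b j : ℝ) * Real.log (2 * Real.pi * b j * q j * |(q j : ℝ) * α - p j| / Real.exp 1))
    (K : ℕ) (hK1 : 1 ≤ K) (hKM : K ≤ M)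
    (hKineq : 802 + 151 * Real.log M / K - Real.log K < 0)
    (hio : ∀ j : ℕ, ∃ j' : ℕ, j < j' ∧ K ≤ a j') :
    Filter.atTop.liminf
      (fun n : ℕ => ∏ r ∈ Finset.Icc 1 n, |2 * Real.sin (Real.pi * r * α)|) = 0 :=
  stmt_16_general α hirr a ha M hM q p hq0 hq1 hqrec hp0 hp1 hprec hlim hLubinsky K hKineq hio
end

section
/- Let α be irrational with unbounded continued fraction coefficients, and suppose Lubinsky's inequality (as in Proposition 5.1) holds. Choose a strictly increasing subsequence (a_{n_j}) with a_{n_j} > a_k for all k < n_j. Then for N_j = q_{n_j}, one has log P_{N_j}(α) ≤ C − log a_{n_j} for an absolute constant C, and hence P_{N_j}(α) → 0 as j → ∞; in particular liminf_{n→∞} P_n(α) = 0. -/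
open Real Finset Filter

/-!
For a record index `N` of the partial quotients, `n = q N` has the single Ostrowski digit `1`
at `N`, so Lubinsky's bound collapses to
`800 + 151 * log (max_{k<N} a k) / a N + log (2π q_N |q_N α - p_N| / e)`.
The middle term is at most `151` because `a N` dominates the earlier partial quotients, and
`q_N |q_N α - p_N| ≤ q_N / q_{N+1} ≤ 1 / a_N` by the alternating approximation of `α` by its
convergents. Hence `log P_{q_N}(α) ≤ C - log a_N`. Record values of an unbounded sequence tend
to infinity, so `P_{q_N}(α) → 0`, and since `q_N → ∞` and `P_n(α) ≥ 0` the liminf vanishes.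
-/

lemma abs_sub_le_of_alternating {c e : ℕ → ℝ} {L : ℝ} (he0 : ∀ n, 0 ≤ e n) (he : Antitone e)
    (hc : ∀ n, c (n + 1) - c n = (-1) ^ n * e n) (hL : Tendsto c atTop (nhds L)) (n : ℕ) :
    |L - c n| ≤ e n := by
  have partial_bound : ∀ d n, 0 ≤ (-1) ^ n * (c (n + d) - c n) ∧
      (-1) ^ n * (c (n + d) - c n) ≤ e n := by
    intro d
    induction d with
    | zero => simpa using he0
    | succ d ih =>
      intro n
      have hsq : ((-1 : ℝ) ^ n) ^ 2 = 1 := by rw [sq, ← mul_pow]; norm_num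
      have hsplit : (-1 : ℝ) ^ n * (c (n + (d + 1)) - c n) =
          e n - (-1) ^ (n + 1) * (c (n + 1 + d) - c (n + 1)) := by
        rw [show n + (d + 1) = n + 1 + d by ring, pow_succ]
        linear_combination (-1 : ℝ) ^ n * hc n + e n * hsq
      obtain ⟨h0, h1⟩ := ih (n + 1)
      have := he (Nat.le_succ n)
      constructor <;> linarith
  have hshift : Tendsto (fun d => (-1) ^ n * (c (n + d) - c n)) atTop
      (nhds ((-1) ^ n * (L - c n))) := by
    have hL' : Tendsto (fun d => c (n + d)) atTop (nhds L) :=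
      ((tendsto_add_atTop_iff_nat n).mpr hL).congr fun d => by rw [add_comm]
    exact (hL'.sub_const _).const_mul _
  have h0 := ge_of_tendsto' hshift fun d => (partial_bound d n).1
  have h1 := le_of_tendsto' hshift fun d => (partial_bound d n).2
  rw [← abs_of_nonneg h0, abs_mul, abs_pow, abs_neg, abs_one, one_pow, one_mul] at h1
  exact h1

lemma liminf_eq_zero_of_tendsto_comp {ι κ : Type*} {l : Filter ι} {u : Filter κ} [NeBot u]
    {f : ι → ℝ} {g : κ → ι} (hf : ∀ i, 0 ≤ f i) (hg : Tendsto g u l)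
    (hfg : Tendsto (f ∘ g) u (nhds 0)) : liminf f l = 0 := by
  have hfreq : ∀ ε > 0, ∃ᶠ i in l, f i ≤ ε := fun ε hε =>
    hg.frequently (hfg.eventually (ge_mem_nhds hε)).frequently
  refine le_antisymm (le_of_forall_gt_imp_ge_of_dense fun ε hε => ?_) ?_
  · exact liminf_le_of_frequently_le (hfreq ε hε) (isBoundedUnder_of ⟨0, hf⟩)
  · exact le_liminf_of_le (IsCoboundedUnder.of_frequently_le (hfreq 1 one_pos))
      (Eventually.of_forall hf)

lemma tendsto_comp_of_record {β : Type*} [Preorder β] {a : ℕ → β} {s : ℕ → ℕ}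
    (hunbdd : ∀ B, ∃ k, B < a k) (hs : Tendsto s atTop atTop)
    (hrecord : ∀ j, ∀ k < s j, a k < a (s j)) : Tendsto (a ∘ s) atTop atTop := by
  refine tendsto_atTop_atTop.mpr fun B => ?_
  obtain ⟨k, hk⟩ := hunbdd B
  obtain ⟨J, hJ⟩ := tendsto_atTop_atTop.mp hs (k + 1)
  exact ⟨J, fun j hj => (hk.trans (hrecord j k (hJ j hj))).le⟩

section Convergents

variable {a q : ℕ → ℕ} {p : ℕ → ℤ}

lemma cf_mul_denom_le_succ (hqrec : ∀ n, 1 ≤ n → q (n + 1) = a n * q n + q (n - 1))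
    {n : ℕ} (hn : 1 ≤ n) : a n * q n ≤ q (n + 1) := by
  rw [hqrec n hn]
  exact Nat.le_add_right _ _

lemma cf_denom_pos (ha : ∀ i, 1 ≤ a i) (hq1 : q 1 = 1)
    (hqrec : ∀ n, 1 ≤ n → q (n + 1) = a n * q n + q (n - 1)) {n : ℕ} (hn : 1 ≤ n) :
    0 < q n := by
  induction n, hn using Nat.le_induction with
  | base => omega
  | succ n hn ih =>
    exact lt_of_lt_of_le (Nat.mul_pos (ha n) ih) (cf_mul_denom_le_succ hqrec hn)

lemma cf_denom_le_succ (ha : ∀ i, 1 ≤ a i)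
    (hqrec : ∀ n, 1 ≤ n → q (n + 1) = a n * q n + q (n - 1)) {n : ℕ} (hn : 1 ≤ n) :
    q n ≤ q (n + 1) :=
  le_trans (Nat.le_mul_of_pos_left _ (ha n)) (cf_mul_denom_le_succ hqrec hn)

lemma cf_tendsto_denom_atTop (ha : ∀ i, 1 ≤ a i) (hq1 : q 1 = 1)
    (hqrec : ∀ n, 1 ≤ n → q (n + 1) = a n * q n + q (n - 1)) :
    Tendsto q atTop atTop := by
  have hmono : StrictMono fun n => q (n + 2) := by
    refine strictMono_nat_of_lt_succ fun n => ?_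
    have hrec : q (n + 3) = a (n + 2) * q (n + 2) + q (n + 1) := hqrec (n + 2) (by omega)
    have := cf_denom_pos ha hq1 hqrec (n := n + 1) (by omega)
    have := Nat.le_mul_of_pos_left (q (n + 2)) (ha (n + 2))
    show q (n + 2) < q (n + 3)
    omega
  exact (tendsto_add_atTop_iff_nat 2).mp hmono.tendsto_atTop

lemma cf_determinant (hq1 : q 1 = 1) (hqrec : ∀ n, 1 ≤ n → q (n + 1) = a n * q n + q (n - 1))
    (hp0 : p 0 = 1) (hp1 : p 1 = 0) (hprec : ∀ n, 1 ≤ n → p (n + 1) = a n * p n + p (n - 1))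
    {n : ℕ} (hn : 1 ≤ n) : p (n + 1) * q n - p n * q (n + 1) = (-1) ^ (n + 1) := by
  induction n, hn using Nat.le_induction with
  | base => simp [hprec 1 le_rfl, hp0, hp1, hq1]
  | succ n hn ih =>
    rw [hprec (n + 1) (by omega), hqrec (n + 1) (by omega), pow_succ]
    simp only [Nat.add_sub_cancel]
    push_cast
    linear_combination -ih

lemma cf_abs_sub_convergent_le {α : ℝ} (ha : ∀ i, 1 ≤ a i) (hq1 : q 1 = 1)
    (hqrec : ∀ n, 1 ≤ n → q (n + 1) = a n * q n + q (n - 1))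
    (hp0 : p 0 = 1) (hp1 : p 1 = 0) (hprec : ∀ n, 1 ≤ n → p (n + 1) = a n * p n + p (n - 1))
    (hlim : Tendsto (fun n => (p n : ℝ) / q n) atTop (nhds α)) {n : ℕ} (hn : 1 ≤ n) :
    |α - p n / q n| ≤ 1 / (q n * q (n + 1)) := by
  have hpos (k : ℕ) : (0 : ℝ) < q (k + 1) := by
    exact_mod_cast cf_denom_pos ha hq1 hqrec (by omega)
  have hmono (k : ℕ) : (q (k + 1) : ℝ) ≤ q (k + 2) := by
    exact_mod_cast cf_denom_le_succ ha hqrec (n := k + 1) (by omega)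
  obtain ⟨m, rfl⟩ : ∃ m, n = m + 1 := ⟨n - 1, by omega⟩
  refine abs_sub_le_of_alternating (c := fun k => (p (k + 1) : ℝ) / q (k + 1))
    (e := fun k => 1 / ((q (k + 1) : ℝ) * q (k + 2))) (fun k => ?_) ?_ (fun k => ?_)
    ((tendsto_add_atTop_iff_nat 1).mpr hlim) m
  · have := hpos k; have := hpos (k + 1)
    positivity
  · refine antitone_nat_of_succ_le fun k => one_div_le_one_div_of_le ?_ ?_
    · exact mul_pos (hpos k) (hpos (k + 1))
    · exact mul_le_mul (hmono k) (hmono (k + 1)) (hpos (k + 1)).le (hpos (k + 1)).le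
  · have hdet : (p (k + 2) : ℝ) * q (k + 1) - p (k + 1) * q (k + 2) = (-1) ^ (k + 2) := by
      exact_mod_cast cf_determinant hq1 hqrec hp0 hp1 hprec (n := k + 1) (by omega)
    have := hpos k; have := hpos (k + 1)
    field_simp
    linear_combination hdet

lemma cf_abs_denom_mul_sub_le {α : ℝ} (ha : ∀ i, 1 ≤ a i) (hq1 : q 1 = 1)
    (hqrec : ∀ n, 1 ≤ n → q (n + 1) = a n * q n + q (n - 1))
    (hp0 : p 0 = 1) (hp1 : p 1 = 0) (hprec : ∀ n, 1 ≤ n → p (n + 1) = a n * p n + p (n - 1))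
    (hlim : Tendsto (fun n => (p n : ℝ) / q n) atTop (nhds α)) {n : ℕ} (hn : 1 ≤ n) :
    |q n * α - p n| ≤ 1 / q (n + 1) := by
  have hq : (0 : ℝ) < q n := by exact_mod_cast cf_denom_pos ha hq1 hqrec hn
  calc |q n * α - p n| = q n * |α - p n / q n| := by
        rw [← abs_of_pos hq, ← abs_mul, abs_of_pos hq, mul_sub, mul_div_cancel₀ _ hq.ne']
    _ ≤ q n * (1 / (q n * q (n + 1))) :=
        mul_le_mul_of_nonneg_left
          (cf_abs_sub_convergent_le ha hq1 hqrec hp0 hp1 hprec hlim hn) hq.le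
    _ = 1 / q (n + 1) := by field_simp

end Convergents

noncomputable def sinProduct (α : ℝ) (n : ℕ) : ℝ := ∏ r ∈ Icc 1 n, |2 * sin (π * r * α)|

/-- Lubinsky's bound (Proposition 5.1) for every `n` with Ostrowski expansion
`n = ∑ j ∈ Icc 1 z, b j * q j`; `log⁺` is written `max (log ·) 0`. -/
def LubinskyBound (α : ℝ) (a q : ℕ → ℕ) (p : ℕ → ℤ) : Prop :=
  ∀ (n z : ℕ) (b : ℕ → ℕ), 1 ≤ n → 1 ≤ z →
    b 1 ≤ a 1 - 1 →
    (∀ j, 2 ≤ j → b j ≤ a j) →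
    (∀ j, 2 ≤ j → b j = a j → b (j - 1) = 0) →
    n = ∑ j ∈ Icc 1 z, b j * q j →
    log (sinProduct α n) ≤
      800 * ((Icc 1 z).filter (fun j => b j ≠ 0)).card
      + 151 * ∑ j ∈ Icc 1 z, ((b j : ℝ) / a j) * log (((Ico 1 j).sup a : ℕ))
      + (3 / 2) * ∑ j ∈ Icc 1 z, max (log (b j)) 0
      + ∑ j ∈ Icc 1 z, (b j : ℝ) * log (2 * π * b j * q j * |(q j : ℝ) * α - p j| / exp 1)

lemma sinProduct_pos {α : ℝ} (hα : Irrational α) (n : ℕ) : 0 < sinProduct α n := by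
  refine prod_pos fun r hr => abs_pos.mpr (mul_ne_zero two_ne_zero ?_)
  refine sin_ne_zero_iff.mpr fun m hm => ?_
  have hr : r ≠ 0 := by have := (mem_Icc.mp hr).1; omega
  exact (hα.mul_natCast hr).ne_int m
    (mul_right_cancel₀ pi_ne_zero (by linear_combination hm.symm))

lemma abs_natCast_mul_sub_intCast_pos {α : ℝ} (hα : Irrational α) {m : ℕ} (hm : m ≠ 0) (k : ℤ) :
    0 < |m * α - k| :=
  abs_pos.mpr (sub_ne_zero.mpr ((hα.natCast_mul hm).ne_int k))

lemma LubinskyBound.log_sinProduct_denom_le {α : ℝ} {a q : ℕ → ℕ} {p : ℕ → ℤ}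
    (hL : LubinskyBound α a q p) (ha : ∀ i, 1 ≤ a i) {N : ℕ} (hN : 2 ≤ N) (hqN : 1 ≤ q N) :
    log (sinProduct α (q N)) ≤
      800 + 151 * (log ((Ico 1 N).sup a : ℕ) / a N)
        + log (2 * π * q N * |q N * α - p N| / exp 1) := by
  have hNmem : N ∈ Icc 1 N := mem_Icc.mpr ⟨by omega, le_rfl⟩
  have hlogPlus (k : ℕ) : max (log (if k = N then 1 else 0 : ℝ)) 0 = 0 := by
    split_ifs <;> simp
  -- `q N` has the single Ostrowski digit `1`, at position `N`.
  have := hL (q N) N (fun k => if k = N then 1 else 0) hqN (by omega)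
    (by rw [if_neg (by omega)]; exact Nat.zero_le _)
    (fun k _ => by split_ifs; exacts [ha k, Nat.zero_le _])
    (fun k _ hk => by have := ha k; split_ifs at hk ⊢ <;> omega)
    (by simp [hNmem])
  simpa [hNmem, hlogPlus, filter_eq', div_eq_inv_mul] using this

lemma LubinskyBound.log_sinProduct_le_sub_log {α : ℝ} {a q : ℕ → ℕ} {p : ℕ → ℤ}
    (hL : LubinskyBound α a q p) (hα : Irrational α) (ha : ∀ i, 1 ≤ a i) (hq1 : q 1 = 1)
    (hqrec : ∀ n, 1 ≤ n → q (n + 1) = a n * q n + q (n - 1))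
    (hp0 : p 0 = 1) (hp1 : p 1 = 0) (hprec : ∀ n, 1 ≤ n → p (n + 1) = a n * p n + p (n - 1))
    (hlim : Tendsto (fun n => (p n : ℝ) / q n) atTop (nhds α))
    {N : ℕ} (hN : 2 ≤ N) (hrecord : ∀ k ∈ Ico 1 N, a k ≤ a N) :
    log (sinProduct α (q N)) ≤ 950 + log (2 * π) - log (a N) := by
  have hqN : 0 < q N := cf_denom_pos ha hq1 hqrec (by omega)
  have haN : (0 : ℝ) < a N := by exact_mod_cast ha N
  have hsup : log ((Ico 1 N).sup a : ℕ) / a N ≤ 1 :=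
    div_le_one_of_le₀ ((log_le_self (Nat.cast_nonneg _)).trans
      (by exact_mod_cast Finset.sup_le hrecord)) haN.le
  have herr : 0 < (q N : ℝ) * |q N * α - p N| :=
    mul_pos (by exact_mod_cast hqN) (abs_natCast_mul_sub_intCast_pos hα hqN.ne' _)
  have herr_le : (q N : ℝ) * |q N * α - p N| ≤ 1 / a N := by
    have hq : (a N : ℝ) * q N ≤ q (N + 1) := by
      exact_mod_cast cf_mul_denom_le_succ hqrec (by omega : 1 ≤ N)
    calc (q N : ℝ) * |q N * α - p N| ≤ q N * (1 / q (N + 1)) :=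
          mul_le_mul_of_nonneg_left (cf_abs_denom_mul_sub_le ha hq1 hqrec hp0 hp1 hprec hlim
            (by omega)) (Nat.cast_nonneg _)
      _ ≤ q N * (1 / (a N * q N)) := by gcongr
      _ = 1 / a N := by field_simp
  have hlast : log (2 * π * q N * |q N * α - p N| / exp 1) ≤ log (2 * π) - 1 - log (a N) := by
    rw [mul_assoc (2 * π), log_div (mul_ne_zero (by positivity) herr.ne') (exp_ne_zero 1),
      log_exp, log_mul (by positivity) herr.ne']
    have := log_le_log herr herr_le
    rw [one_div, log_inv] at this
    linarith
  -- `950 = 800 + 151 - 1`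
  linarith [hL.log_sinProduct_denom_le ha hN hqN]

theorem stmt_19_general (α : ℝ) (hirr : Irrational α)
    (a : ℕ → ℕ) (ha : ∀ i, 1 ≤ a i)
    (hunbdd : ∀ B : ℕ, ∃ j, B < a j)
    (q : ℕ → ℕ) (p : ℕ → ℤ)
    (hq1 : q 1 = 1)
    (hqrec : ∀ n, 1 ≤ n → q (n + 1) = a n * q n + q (n - 1))
    (hp0 : p 0 = 1) (hp1 : p 1 = 0)
    (hprec : ∀ n, 1 ≤ n → p (n + 1) = a n * p n + p (n - 1))
    (hlim : Filter.Tendsto (fun n => (p n : ℝ) / q n) Filter.atTop (nhds α))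
    (hLubinsky : ∀ (n z : ℕ) (b : ℕ → ℕ), 1 ≤ n → 1 ≤ z →
      b 1 ≤ a 1 - 1 →
      (∀ j, 2 ≤ j → b j ≤ a j) →
      (∀ j, 2 ≤ j → b j = a j → b (j - 1) = 0) →
      n = ∑ j ∈ Finset.Icc 1 z, b j * q j →
      Real.log (∏ r ∈ Finset.Icc 1 n, |2 * Real.sin (Real.pi * r * α)|) ≤
        800 * ((Finset.Icc 1 z).filter (fun j => b j ≠ 0)).card
        + 151 * ∑ j ∈ Finset.Icc 1 z,
            ((b j : ℝ) / a j) * Real.log (((Finset.Ico 1 j).sup a : ℕ))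
        + (3 / 2) * ∑ j ∈ Finset.Icc 1 z, max (Real.log (b j)) 0
        + ∑ j ∈ Finset.Icc 1 z,
            (b j : ℝ) * Real.log (2 * Real.pi * b j * q j * |(q j : ℝ) * α - p j| / Real.exp 1))
    (nseq : ℕ → ℕ) (hnseq : StrictMono nseq) (hnseq1 : ∀ j, 2 ≤ nseq j)
    (hdom : ∀ j, ∀ k < nseq j, a k < a (nseq j)) :
    (∃ C : ℝ, ∀ j : ℕ,
      Real.log (∏ r ∈ Finset.Icc 1 (q (nseq j)), |2 * Real.sin (Real.pi * r * α)|) ≤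
        C - Real.log (a (nseq j))) ∧
    Filter.Tendsto
      (fun j : ℕ => ∏ r ∈ Finset.Icc 1 (q (nseq j)), |2 * Real.sin (Real.pi * r * α)|)
      Filter.atTop (nhds 0) ∧
    Filter.atTop.liminf
      (fun n : ℕ => ∏ r ∈ Finset.Icc 1 n, |2 * Real.sin (Real.pi * r * α)|) = 0 := by
  have hP : ∀ n, 0 < sinProduct α n := sinProduct_pos hirr
  have hbound (j : ℕ) :
      log (sinProduct α (q (nseq j))) ≤ 950 + log (2 * π) - log (a (nseq j)) :=
    LubinskyBound.log_sinProduct_le_sub_log hLubinsky hirr ha hq1 hqrec hp0 hp1 hprec hlim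
      (hnseq1 j) fun k hk => (hdom j k (mem_Ico.mp hk).2).le
  have hlog_atBot : Tendsto (fun j => log (sinProduct α (q (nseq j)))) atTop atBot := by
    have ha_atTop := tendsto_comp_of_record hunbdd hnseq.tendsto_atTop hdom
    refine tendsto_atBot_mono hbound (tendsto_atBot_add_const_left _ _ ?_)
    exact tendsto_neg_atBot_iff.mpr
      (tendsto_log_atTop.comp (tendsto_natCast_atTop_atTop.comp ha_atTop))
  have hP_zero : Tendsto (fun j => sinProduct α (q (nseq j))) atTop (nhds 0) :=
    (tendsto_exp_atBot.comp hlog_atBot).congr fun j => exp_log (hP _)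
  exact ⟨⟨_, hbound⟩, hP_zero, liminf_eq_zero_of_tendsto_comp (fun n => (hP n).le)
    ((cf_tendsto_denom_atTop ha hq1 hqrec).comp hnseq.tendsto_atTop) hP_zero⟩

/-- for `α` irrational with unbounded continued fraction
coefficients, assuming Lubinsky's inequality, taking indices `nseq j` at which
the coefficients exceed all earlier ones yields
`log P_{q (nseq j)}(α) ≤ C - log a_{nseq j}`, hence `P_{q (nseq j)}(α) → 0`,
and in particular `liminf P_n(α) = 0`. -/
theorem stmt_19 (α : ℝ) (hirr : Irrational α) (h0 : 0 < α) (h1 : α < 1)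
    (a : ℕ → ℕ) (ha : ∀ i, 1 ≤ a i)
    (hunbdd : ∀ B : ℕ, ∃ j, B < a j)
    (q : ℕ → ℕ) (p : ℕ → ℤ)
    (hq0 : q 0 = 0) (hq1 : q 1 = 1)
    (hqrec : ∀ n, 1 ≤ n → q (n + 1) = a n * q n + q (n - 1))
    (hp0 : p 0 = 1) (hp1 : p 1 = 0)
    (hprec : ∀ n, 1 ≤ n → p (n + 1) = a n * p n + p (n - 1))
    (hlim : Filter.Tendsto (fun n => (p n : ℝ) / q n) Filter.atTop (nhds α))
    (hLubinsky : ∀ (n z : ℕ) (b : ℕ → ℕ), 1 ≤ n → 1 ≤ z →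
      b 1 ≤ a 1 - 1 →
      (∀ j, 2 ≤ j → b j ≤ a j) →
      (∀ j, 2 ≤ j → b j = a j → b (j - 1) = 0) →
      n = ∑ j ∈ Finset.Icc 1 z, b j * q j →
      Real.log (∏ r ∈ Finset.Icc 1 n, |2 * Real.sin (Real.pi * r * α)|) ≤
        800 * ((Finset.Icc 1 z).filter (fun j => b j ≠ 0)).card
        + 151 * ∑ j ∈ Finset.Icc 1 z,
            ((b j : ℝ) / a j) * Real.log (((Finset.Ico 1 j).sup a : ℕ))
        + (3 / 2) * ∑ j ∈ Finset.Icc 1 z, max (Real.log (b j)) 0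
        + ∑ j ∈ Finset.Icc 1 z,
            (b j : ℝ) * Real.log (2 * Real.pi * b j * q j * |(q j : ℝ) * α - p j| / Real.exp 1))
    (nseq : ℕ → ℕ) (hnseq : StrictMono nseq) (hnseq1 : ∀ j, 2 ≤ nseq j)
    (hdom : ∀ j, ∀ k < nseq j, a k < a (nseq j)) :
    (∃ C : ℝ, ∀ j : ℕ,
      Real.log (∏ r ∈ Finset.Icc 1 (q (nseq j)), |2 * Real.sin (Real.pi * r * α)|) ≤
        C - Real.log (a (nseq j))) ∧
    Filter.Tendsto
      (fun j : ℕ => ∏ r ∈ Finset.Icc 1 (q (nseq j)), |2 * Real.sin (Real.pi * r * α)|)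
      Filter.atTop (nhds 0) ∧
    Filter.atTop.liminf
      (fun n : ℕ => ∏ r ∈ Finset.Icc 1 n, |2 * Real.sin (Real.pi * r * α)|) = 0 :=
  stmt_19_general α hirr a ha hunbdd q p hq1 hqrec hp0 hp1 hprec hlim hLubinsky nseq hnseq hnseq1
    hdom
end
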